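/- arXiv:1704.05363 — 3 statements merged into one kernel-verified Lean document; each statement's English description precedes it below -/
import Mathlib

section
/- In the free bialgebra B = k⟨g,x⟩ (with Δ(g)=g⊗g, Δ(x)=x⊗1+g⊗x), the comultiplication of the homogeneous sums C_{p,q} satisfies Δ(C_{p,q}) = Σ_{k≥0} C_{p+k,q-k} ⊗ C_{p,k}. -/
/-!
Let `W n a` (`wordSum n a`) be the sum of the words of length `n` with `a` letters `g`. For a
central variable `t`, expanding the product gives `Σ_a W n a t^a = (g t + x)^n`. Applying `Δ`
turns this into `(g⊗g t + x⊗1 + g⊗x)^n = ((g⊗1) Y + x⊗1)^n` with `Y = 1 ⊗ (g t + x)`, and `Y`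
commutes with `B ⊗ 1`, so the same expansion with `Y` in place of `t` gives
`Σ_b (W n b ⊗ 1) Y^b = Σ_a (Σ_b W n b ⊗ W b a) t^a`. Comparing coefficients of `t^a` gives
`Δ (W n a) = Σ_b W n b ⊗ W b a`, which is the theorem since `C_{p,q} = W (p+q) p`.
-/

open FreeAlgebra

variable (kk : Type) [Field kk]

/-- The free algebra `B = k⟨g,x⟩` on two generators. -/
abbrev FreeBi (kk : Type) [Field kk] := FreeAlgebra kk (Fin 2)

/-- The generator `g`. -/
noncomputable def gB : FreeBi kk := FreeAlgebra.ι kk 0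

/-- The generator `x`. -/
noncomputable def xB : FreeBi kk := FreeAlgebra.ι kk 1

/-- The monomial (word) associated to a function `f : Fin n → Fin 2`. -/
noncomputable def wordB {n : ℕ} (f : Fin n → Fin 2) : FreeBi kk :=
  (List.ofFn fun i => FreeAlgebra.ι kk (f i)).prod

/-- `CB a b` is the sum of all monomials with `a` occurrences of `g` and `b`
occurrences of `x`. -/
noncomputable def CB (a b : ℕ) : FreeBi kk :=
  ∑ f ∈ Finset.univ.filter
      (fun f : Fin (a + b) → Fin 2 => (Finset.univ.filter (fun i => f i = 0)).card = a),
    wordB kk f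

open TensorProduct in
/-- The comultiplication of the free bialgebra, determined by
`Δ(g) = g ⊗ g` and `Δ(x) = x ⊗ 1 + g ⊗ x`. -/
noncomputable def DeltaB : FreeBi kk →ₐ[kk] FreeBi kk ⊗[kk] FreeBi kk :=
  FreeAlgebra.lift kk
    (fun i => if i = 0 then gB kk ⊗ₜ[kk] gB kk else xB kk ⊗ₜ[kk] 1 + gB kk ⊗ₜ[kk] xB kk)

open Polynomial TensorProduct

def gCount {n : ℕ} (f : Fin n → Fin 2) : ℕ := (Finset.univ.filter fun i => f i = 0).card

noncomputable def wordSum (n a : ℕ) : FreeBi kk :=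
  ∑ f ∈ Finset.univ.filter (fun f : Fin n → Fin 2 => gCount f = a), wordB kk f

lemma CB_eq_wordSum (a b : ℕ) : CB kk a b = wordSum kk (a + b) a := rfl

lemma gCount_le {n : ℕ} (f : Fin n → Fin 2) : gCount f ≤ n := by
  simpa [gCount] using Finset.card_filter_le Finset.univ fun i => f i = 0

lemma gCount_cons {n : ℕ} (i : Fin 2) (f : Fin n → Fin 2) :
    gCount (Fin.cons i f : Fin (n + 1) → Fin 2) = (if i = 0 then 1 else 0) + gCount f := by
  simp only [gCount, Finset.card_filter, Fin.sum_univ_succ, Fin.cons_zero, Fin.cons_succ]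

lemma wordB_cons {n : ℕ} (i : Fin 2) (f : Fin n → Fin 2) :
    wordB kk (Fin.cons i f : Fin (n + 1) → Fin 2) = ι kk i * wordB kk f := by
  simp [wordB, List.ofFn_succ]

lemma wordSum_eq_zero_of_lt {n a : ℕ} (h : n < a) : wordSum kk n a = 0 :=
  Finset.sum_eq_zero fun f hf => absurd (Finset.mem_filter.1 hf).2
    (by have := gCount_le f; omega)

section Expansion

variable {R : Type*} [Semiring R] [Algebra kk R] (φ : FreeBi kk →ₐ[kk] R) {y : R}

theorem pow_mul_add_eq_sum_wordB (hy : ∀ b, Commute y (φ b)) (n : ℕ) :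
    (φ (gB kk) * y + φ (xB kk)) ^ n = ∑ f : Fin n → Fin 2, φ (wordB kk f) * y ^ gCount f := by
  induction n with
  | zero => simp [wordB, gCount]
  | succ n ih =>
    rw [pow_succ', ih, ← (Fin.consEquiv fun _ => Fin 2).sum_comp, Fintype.sum_prod_type,
      Fin.sum_univ_two, add_mul, Finset.mul_sum, Finset.mul_sum]
    simp only [Fin.consEquiv, Equiv.coe_fn_mk]
    congr 1 <;> refine Finset.sum_congr rfl fun f _ => ?_
    · rw [wordB_cons, gCount_cons, if_pos rfl, map_mul, add_comm, pow_succ',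
        mul_assoc, ← mul_assoc y, (hy _).eq, mul_assoc, mul_assoc]
      rfl
    · rw [wordB_cons, gCount_cons, if_neg one_ne_zero, zero_add, map_mul,
        mul_assoc]
      rfl

theorem pow_mul_add_eq_sum_wordSum (hy : ∀ b, Commute y (φ b)) {n N : ℕ} (hN : n < N) :
    (φ (gB kk) * y + φ (xB kk)) ^ n = ∑ b ∈ Finset.range N, φ (wordSum kk n b) * y ^ b := by
  rw [pow_mul_add_eq_sum_wordB kk φ hy, ← Finset.sum_fiberwise_of_maps_to (g := gCount)
    (t := Finset.range N) fun f _ => Finset.mem_range.2 ((gCount_le f).trans_lt hN)]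
  refine Finset.sum_congr rfl fun b _ => ?_
  rw [wordSum, map_sum, Finset.sum_mul]
  exact Finset.sum_congr rfl fun f hf => by rw [(Finset.mem_filter.1 hf).2]

end Expansion

lemma coeff_pow_C_mul_X_add_C {A : Type*} [Semiring A] [Algebra kk A] (φ : FreeBi kk →ₐ[kk] A)
    (n a : ℕ) : ((C (φ (gB kk)) * X + C (φ (xB kk))) ^ n).coeff a = φ (wordSum kk n a) := by
  have h := pow_mul_add_eq_sum_wordSum kk (CAlgHom.comp φ) (fun _ => commute_X _)
    (Nat.lt_add_of_pos_right (n := n) (Nat.succ_pos a))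
  simp only [AlgHom.comp_apply, CAlgHom_apply] at h
  simp only [h, finsetSum_coeff, coeff_C_mul_X_pow, Finset.sum_ite_eq, Finset.mem_range]
  exact if_pos (by omega)

lemma DeltaB_gB : DeltaB kk (gB kk) = gB kk ⊗ₜ gB kk := by
  simp [DeltaB, gB]

lemma DeltaB_xB : DeltaB kk (xB kk) = xB kk ⊗ₜ 1 + gB kk ⊗ₜ xB kk := by
  simp [DeltaB, xB]

open Algebra.TensorProduct in
theorem DeltaB_wordSum (n a : ℕ) :
    DeltaB kk (wordSum kk n a) =
      ∑ b ∈ Finset.range (n + 1), wordSum kk n b ⊗ₜ wordSum kk b a := by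
  let φL : FreeBi kk →ₐ[kk] (FreeBi kk ⊗[kk] FreeBi kk)[X] := CAlgHom.comp includeLeft
  set Y : (FreeBi kk ⊗[kk] FreeBi kk)[X] := C (1 ⊗ₜ gB kk) * X + C (1 ⊗ₜ xB kk)
  have hRL (u v : FreeBi kk) : Commute (C (1 ⊗ₜ u)) (φL v) :=
    ((Commute.one_left v).tmul (Commute.one_right u)).map C
  have hY (v : FreeBi kk) : Commute Y (φL v) :=
    ((hRL _ v).mul_left (commute_X _)).add_left (hRL _ v)
  have hΔ :
      C (DeltaB kk (gB kk)) * X + C (DeltaB kk (xB kk)) = φL (gB kk) * Y + φL (xB kk) := by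
    simp only [DeltaB_gB, DeltaB_xB, φL, Y, AlgHom.comp_apply, CAlgHom_apply, includeLeft_apply,
      mul_add, ← mul_assoc, ← C_mul, tmul_mul_tmul, mul_one, one_mul, C_add]
    abel
  rw [← coeff_pow_C_mul_X_add_C, hΔ, pow_mul_add_eq_sum_wordSum kk φL hY (Nat.lt_succ_self n),
    finsetSum_coeff]
  refine Finset.sum_congr rfl fun b _ => ?_
  have hYpow : (Y ^ b).coeff a = 1 ⊗ₜ wordSum kk b a :=
    coeff_pow_C_mul_X_add_C kk includeRight b a
  rw [AlgHom.comp_apply, CAlgHom_apply, coeff_C_mul, hYpow, includeLeft_apply,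
    tmul_mul_tmul, mul_one, one_mul]

open TensorProduct in
/-- `Δ(C_{p,q}) = Σ_{k≥0} C_{p+k,q-k} ⊗ C_{p,k}` (the terms with
`k > q` vanish since `C_{p+k,q-k} = 0` for negative second index). -/
theorem DeltaB_CB (p q : ℕ) :
    DeltaB kk (CB kk p q) =
      ∑ k ∈ Finset.range (q + 1), CB kk (p + k) (q - k) ⊗ₜ[kk] CB kk p k := by
  have h_low : ∑ b ∈ Finset.range p, wordSum kk (p + q) b ⊗ₜ[kk] wordSum kk b p = 0 :=
    Finset.sum_eq_zero fun b hb => by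
      rw [wordSum_eq_zero_of_lt kk (Finset.mem_range.1 hb), tmul_zero]
  rw [CB_eq_wordSum, DeltaB_wordSum, add_assoc, Finset.sum_range_add, h_low, zero_add]
  refine Finset.sum_congr rfl fun k hk => ?_
  rw [CB_eq_wordSum, CB_eq_wordSum, add_assoc,
    Nat.add_sub_of_le (Nat.lt_succ_iff.1 (Finset.mem_range.1 hk))]
end

section
/- Let p be a prime and let (a_n)_{n≥1} be the sequence over a field k of characteristic p with a_n = 0 if p | n and a_n = 1 otherwise. Then (a_n) satisfies the linear recurrence with characteristic polynomial x^p − 1 (i.e., a_{n+p} = a_n for all n), and no nonzero polynomial of degree less than p is satisfied by (a_n); hence x^p − 1 is the minimal polynomial of this linearly recursive sequence. -/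
/-- over a field `k` of characteristic `p` (a prime), the sequence with
`a_n = 0` if `p ∣ n` and `a_n = 1` otherwise satisfies the linear recurrence with
characteristic polynomial `X^p - 1` (i.e. `a_{n+p} = a_n`), and satisfies no nonzero
polynomial of degree `< p`; hence `X^p - 1` (which is monic of degree `p`) is the
minimal polynomial of this linearly recursive sequence. -/
theorem minimal_polynomial_of_indicator_sequence
    (p : ℕ) [Fact (Nat.Prime p)] (kk : Type) [Field kk] [CharP kk p]
    (a : ℕ → kk) (ha : ∀ n, a n = if p ∣ n then 0 else 1) :
    (∀ n ≥ 1, a (n + p) = a n) ∧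
    (∀ n ≥ 1, ∑ m ∈ Finset.range ((Polynomial.X ^ p - 1 : Polynomial kk).natDegree + 1),
        (Polynomial.X ^ p - 1 : Polynomial kk).coeff m * a (n + m) = 0) ∧
    (∀ f : Polynomial kk, f ≠ 0 →
      (∀ n ≥ 1, ∑ m ∈ Finset.range (f.natDegree + 1), f.coeff m * a (n + m) = 0) →
      p ≤ f.natDegree) := by
  have hp : p.Prime := Fact.out
  have hper : ∀ n ≥ 1, a (n + p) = a n := by
    intro n _
    simp [ha, Nat.dvd_add_self_right]
  refine ⟨hper, ?_, ?_⟩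
  · intro n hn
    have hdeg : (Polynomial.X ^ p - 1 : Polynomial kk).natDegree = p := by
      have := Polynomial.natDegree_X_pow_sub_C (n := p) (r := (1 : kk))
      simpa using this
    rw [hdeg]
    have hmem : p ∈ Finset.range (p + 1) := Finset.self_mem_range_succ p
    have h0 : (0 : ℕ) ∈ Finset.range (p + 1) := Finset.mem_range.mpr (by omega)
    simp only [Polynomial.coeff_sub, Polynomial.coeff_X_pow, Polynomial.coeff_one,
      sub_mul, Finset.sum_sub_distrib, ite_mul, one_mul, zero_mul]
    rw [Finset.sum_ite_eq' _ p, Finset.sum_ite_eq' _ 0]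
    simp [hmem, h0, hper n hn]
  · intro f hf hrel
    by_contra hlt
    push_neg at hlt
    set d := f.natDegree with hd
    rcases Nat.eq_zero_or_pos d with hd0 | hd1
    · have h1 := hrel 1 le_rfl
      rw [hd0] at h1
      rw [Finset.sum_range_one, ha] at h1
      rw [if_neg (by simpa [Nat.dvd_one] using hp.ne_one : ¬ p ∣ 1 + 0), mul_one] at h1
      have hfd : f.natDegree = 0 := hd0
      exact hf (by rw [Polynomial.eq_C_of_natDegree_eq_zero hfd, h1, map_zero])
    · set S : kk := ∑ m ∈ Finset.range (d + 1), f.coeff m with hS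
      have key : ∀ j ≤ d, f.coeff j = S := by
        intro j hj
        have hjp : j < p := lt_of_le_of_lt hj hlt
        have hn := hrel (p - j) (by omega)
        have hcongr : ∀ m ∈ Finset.range (d + 1),
            f.coeff m * a (p - j + m) = f.coeff m - (if m = j then f.coeff j else 0) := by
          intro m hm
          simp only [Finset.mem_range] at hm
          rw [ha]
          have hiff : p ∣ (p - j + m) ↔ m = j := by
            constructor
            · rintro ⟨c, hc⟩
              have hmp : m < p := by omega
              have h1 : 0 < p * c := by omega
              have h2 : p * c < p * 2 := by omega
              have hc2 : c < 2 := Nat.lt_of_mul_lt_mul_left h2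
              have hc1 : 0 < c := Nat.pos_of_mul_pos_left (by rwa [mul_comm] at h1)
              have hce : c = 1 := by omega
              subst hce
              rw [mul_one] at hc
              omega
            · rintro rfl; exact ⟨1, by omega⟩
          by_cases h : m = j
          · subst h
            rw [if_pos (hiff.mpr rfl)]
            simp
          · rw [if_neg (fun hc => h (hiff.mp hc))]
            simp [h]
        rw [Finset.sum_congr rfl hcongr, Finset.sum_sub_distrib,
          Finset.sum_ite_eq' _ j] at hn
        rw [if_pos (Finset.mem_range.mpr (by omega))] at hn
        rw [← hS] at hn
        exact (sub_eq_zero.mp hn).symm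
      have hSS : S = (d + 1 : ℕ) • S := by
        conv_lhs => rw [hS, Finset.sum_congr rfl
          (fun j hj => key j (by simpa [Nat.lt_succ_iff] using Finset.mem_range.mp hj))]
        simp
      have hdS : (d : kk) * S = 0 := by
        have h := hSS
        push_cast [nsmul_eq_mul] at h
        linear_combination -h
      have hdne : (d : kk) ≠ 0 := by
        intro h
        have := (CharP.cast_eq_zero_iff kk p d).mp h
        have := Nat.le_of_dvd hd1 this
        omega
      have hS0 : S = 0 := by
        rcases mul_eq_zero.mp hdS with h | h
        · exact absurd h hdne
        · exact h
      have : f = 0 := by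
        ext m
        by_cases hm : m ≤ d
        · rw [key m hm, hS0]; simp
        · simp [Polynomial.coeff_eq_zero_of_natDegree_lt (by omega : f.natDegree < m)]
      exact hf this
end

section
/- Let A be the p×p matrix over a field of characteristic p whose (i,j) entry is 0 if i+j = p−1 (anti-diagonal, with 0-based indexing) and 1 otherwise. Then det(A) = ±(p−1) ≠ 0 in characteristic p, so A is invertible. -/
/-- let `A` be the `p × p` matrix over a field of characteristic `p` with
`0`'s on the anti-diagonal and `1`'s elsewhere. Then `det A = ±(p-1)`, which is nonzero
in characteristic `p`, so `A` is invertible. -/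
theorem antidiagonal_matrix_det
    (p : ℕ) (hp : Nat.Prime p) (kk : Type) [Field kk] [CharP kk p]
    (A : Matrix (Fin p) (Fin p) kk)
    (hA : ∀ i j : Fin p, A i j = if (i : ℕ) + (j : ℕ) = p - 1 then 0 else 1) :
    (A.det = ((p - 1 : ℕ) : kk) ∨ A.det = -((p - 1 : ℕ) : kk)) ∧ IsUnit A.det := by
  have hp0 : (p : kk) = 0 := CharP.cast_eq_zero kk p
  set M : Matrix (Fin p) (Fin p) kk := Matrix.of fun i j => if i = j then (0:kk) else 1 with hM
  have hsub : A = M.submatrix (Fin.revPerm : Equiv.Perm (Fin p)) id := by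
    ext i j
    simp only [Matrix.submatrix_apply, id, hM, Matrix.of_apply, hA, Fin.revPerm_apply]
    have hi := i.isLt; have hj := j.isLt
    by_cases h : (i:ℕ) + j = p - 1
    · rw [if_pos h, if_pos]
      ext
      simp [Fin.val_rev]; omega
    · rw [if_neg h, if_neg]
      intro hc
      apply h
      have : (Fin.rev i : ℕ) = (j : ℕ) := by rw [hc]
      simp [Fin.val_rev] at this; omega
  -- M = -(1 - J) where J is all-ones
  have hMdet : M.det = (-1)^p * (1 - (p:kk)) := by
    have : M = -(1 - Matrix.of fun (_ _ : Fin p) => (1:kk)) := by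
      ext i j
      by_cases h : i = j <;> simp [hM, h, Matrix.one_apply]
    rw [this, Matrix.det_neg]
    congr 1
    · simp
    have hJ : (Matrix.of fun (_ _ : Fin p) => (1:kk))
        = Matrix.replicateCol Unit (fun _ => (1:kk)) * Matrix.replicateRow Unit (fun _ => (1:kk)) := by
      ext i j
      simp [Matrix.mul_apply]
    have hneg : -Matrix.replicateCol Unit (fun _ : Fin p => (1:kk)) = Matrix.replicateCol Unit (fun _ => (-1:kk)) := by
      ext i j; simp
    rw [hJ, sub_eq_add_neg, ← Matrix.neg_mul, hneg, Matrix.det_one_add_replicateCol_mul_replicateRow]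
    simp [dotProduct]
  have hdet : A.det = (Equiv.Perm.sign (Fin.revPerm : Equiv.Perm (Fin p)) : ℤ) * ((-1)^p * (1 - (p:kk))) := by
    rw [hsub, Matrix.det_permute, hMdet]
  have hpm : A.det = 1 ∨ A.det = -1 := by
    rcases Int.units_eq_one_or (Equiv.Perm.sign (Fin.revPerm : Equiv.Perm (Fin p))) with h | h <;>
      rcases Nat.even_or_odd p with he | he <;>
      simp [hdet, h, he.neg_one_pow, hp0]
  have hcast : ((p - 1 : ℕ) : kk) = -1 := by
    rw [Nat.cast_sub hp.one_le, hp0]; ring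
  constructor
  · rcases hpm with h | h
    · right; rw [h, hcast]; ring
    · left; rw [h, hcast]
  · rcases hpm with h | h <;> rw [h] <;> simp
end
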